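/- arXiv:2510.07470 — 3 statements merged into one kernel-verified Lean document; each statement's English description precedes it below -/
import Mathlib

section
/- Let f, g : ℝ^d → ℝ be differentiable with L_f- and L_g-Lipschitz gradients respectively, L = L_f + L_g, F = f + g, θ ∈ (0,1], and 0 < η ≤ 1/L. Let x^{−1} = x⁰, x¹, …, x^𝒦 and z⁰, …, z^{𝒦−1} (𝒦 ≥ 1) be an inertial proximal epoch, i.e. z^k = x^k + (1−θ)(x^k − x^{k−1}) and (z^k − x^{k+1})/η = ∇f(x^{k+1}) + ∇g(z^k) for k = 0,…,𝒦−1. Then F(x^𝒦) − F(x⁰) ≤ (1/2)·(1/η + L)·Σ_{k=0}^{𝒦−1}‖x^{k+1} − x^k‖² − (1/(2η) − L_f²/(2L) − (3/2)·L)·Σ_{k=0}^{𝒦−1}‖z^k − x^{k+1}‖². -/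
/-!
Per step, the descent lemma for `f` and `g` at `x^{k+1}`, the optimality condition, the
polarization identity for `⟪z^k - x^{k+1}, x^k - x^{k+1}⟫` and Young's inequality for the
mismatch `∇g(z^k) - ∇g(x^{k+1})` bound `F(x^{k+1}) - F(x^k)` by `‖z^k - x^k‖² / (2η)` plus
multiples of `‖x^{k+1} - x^k‖²` and `‖z^k - x^{k+1}‖²`. As `θ ∈ (0, 1]`, the inertial term
satisfies `‖z^k - x^k‖ ≤ ‖x^k - x^{k-1}‖`, so after telescoping it is absorbed by the step
lengths; the term for `k = 0` vanishes because `x^{-1} = x^0`.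
-/

open Finset
open scoped RealInnerProductSpace

section

variable {E : Type*} [NormedAddCommGroup E]

theorem nonneg_of_forall_norm_sub_le_mul [Nontrivial E] {F : Type*} [SeminormedAddCommGroup F]
    {φ : E → F} {C : ℝ} (hφ : ∀ a b, ‖φ a - φ b‖ ≤ C * ‖a - b‖) : 0 ≤ C := by
  obtain ⟨a, b, hab⟩ := exists_pair_ne E
  exact nonneg_of_mul_nonneg_left ((norm_nonneg _).trans (hφ a b))
    (norm_pos_iff.mpr (sub_ne_zero.mpr hab))

theorem sum_range_norm_sub_pred_sq_le (x : ℕ → E) (n : ℕ) :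
    ∑ k ∈ range n, ‖x k - x (k - 1)‖ ^ 2 ≤ ∑ k ∈ range n, ‖x (k + 1) - x k‖ ^ 2 := by
  cases n with
  | zero => simp
  | succ n =>
    rw [sum_range_succ', sum_range_succ]
    simp

end

section

variable {E : Type*} [NormedAddCommGroup E] [InnerProductSpace ℝ E] [CompleteSpace E]

theorem abs_sub_sub_inner_gradient_le {h : E → ℝ} {C : ℝ} (hh : Differentiable ℝ h)
    (hlip : ∀ a b, ‖gradient h a - gradient h b‖ ≤ C * ‖a - b‖) (x y : E) :
    |h y - h x - ⟪gradient h x, y - x⟫| ≤ C / 2 * ‖y - x‖ ^ 2 := by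
  set v := y - x
  have hderiv (t : ℝ) : HasDerivAt (fun t : ℝ => h (x + t • v) - h x - t * ⟪gradient h x, v⟫)
      (⟪gradient h (x + t • v), v⟫ - ⟪gradient h x, v⟫) t := by
    have hline : HasDerivAt (fun t : ℝ => x + t • v) v t := by
      simpa using ((hasDerivAt_id t).smul_const v).const_add x
    have := ((hh _).hasGradientAt.hasFDerivAt.comp_hasDerivAt t hline).sub_const (h x)
      |>.sub ((hasDerivAt_id t).mul_const ⟪gradient h x, v⟫)
    exact this.congr_deriv (by simp)
  have hbound (t : ℝ) (ht : t ∈ Set.Ico (0 : ℝ) 1) :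
      ‖⟪gradient h (x + t • v), v⟫ - ⟪gradient h x, v⟫‖ ≤ C * ‖v‖ ^ 2 * t := by
    rw [← inner_sub_left, Real.norm_eq_abs]
    calc |⟪gradient h (x + t • v) - gradient h x, v⟫|
        ≤ ‖gradient h (x + t • v) - gradient h x‖ * ‖v‖ := abs_real_inner_le_norm _ _
      _ ≤ C * ‖(x + t • v) - x‖ * ‖v‖ := by gcongr; exact hlip _ _
      _ = C * ‖v‖ ^ 2 * t := by
        rw [add_sub_cancel_left, norm_smul, Real.norm_of_nonneg ht.1]; ring
  have := image_norm_le_of_norm_deriv_right_le_deriv_boundary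
    (B := fun t => C / 2 * ‖v‖ ^ 2 * t ^ 2) (B' := fun t => C * ‖v‖ ^ 2 * t)
    (fun t _ => (hderiv t).continuousAt.continuousWithinAt)
    (fun t _ => (hderiv t).hasDerivWithinAt) (by simp)
    (fun t => ((hasDerivAt_pow 2 t).const_mul _).congr_deriv (by ring)) hbound
    (Set.right_mem_Icc.mpr zero_le_one)
  simpa [v] using this

theorem sub_le_of_forward_backward_step {f g : E → ℝ} {Lf Lg c : ℝ}
    (hf : Differentiable ℝ f) (hg : Differentiable ℝ g)
    (hflip : ∀ a b, ‖gradient f a - gradient f b‖ ≤ Lf * ‖a - b‖)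
    (hglip : ∀ a b, ‖gradient g a - gradient g b‖ ≤ Lg * ‖a - b‖) (hLg : 0 ≤ Lg)
    {a w b : E} (hb : c • (w - b) = gradient f b + gradient g w) :
    f b + g b - (f a + g a) ≤ c / 2 * ‖w - a‖ ^ 2 + ((Lf + 2 * Lg) / 2 - c / 2) * ‖b - a‖ ^ 2
      + (Lg / 2 - c / 2) * ‖w - b‖ ^ 2 := by
  have hdescent {h : E → ℝ} {C : ℝ} (hh : Differentiable ℝ h)
      (hlip : ∀ a b, ‖gradient h a - gradient h b‖ ≤ C * ‖a - b‖) :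
      h b - h a ≤ -⟪gradient h b, a - b⟫ + C / 2 * ‖a - b‖ ^ 2 := by
    linarith [neg_abs_le (h a - h b - ⟪gradient h b, a - b⟫),
      abs_sub_sub_inner_gradient_le hh hlip b a]
  have hgrad_f : ⟪gradient f b, a - b⟫ = c * ⟪w - b, a - b⟫ - ⟪gradient g w, a - b⟫ := by
    rw [eq_sub_of_add_eq hb.symm, inner_sub_left, real_inner_smul_left]
  have hpolar : 2 * ⟪w - b, a - b⟫ = ‖w - b‖ ^ 2 + ‖a - b‖ ^ 2 - ‖w - a‖ ^ 2 := by
    have := norm_sub_sq_real (w - b) (a - b)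
    rw [sub_sub_sub_cancel_right] at this
    linarith
  have hcross : ⟪gradient g w - gradient g b, a - b⟫ ≤ Lg / 2 * (‖w - b‖ ^ 2 + ‖a - b‖ ^ 2) :=
    calc ⟪gradient g w - gradient g b, a - b⟫
        ≤ ‖gradient g w - gradient g b‖ * ‖a - b‖ := real_inner_le_norm _ _
      _ ≤ Lg * ‖w - b‖ * ‖a - b‖ := by gcongr; exact hglip w b
      _ ≤ Lg / 2 * (‖w - b‖ ^ 2 + ‖a - b‖ ^ 2) := by
        nlinarith [mul_nonneg hLg (sq_nonneg (‖w - b‖ - ‖a - b‖))]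
  rw [inner_sub_left] at hcross
  rw [norm_sub_rev b a]
  linarith [hdescent hf hflip, hdescent hg hglip, congrArg (c * ·) hpolar]

/-- `k - 1` is truncated subtraction, so `x (0 - 1) = x 0` realizes the convention `x⁻¹ = x⁰`. -/
structure IsInertialProxEpoch (f g : E → ℝ) (θ η : ℝ) (N : ℕ) (x z : ℕ → E) : Prop where
  extrapolate : ∀ k < N, z k = x k + (1 - θ) • (x k - x (k - 1))
  prox_grad : ∀ k < N, (1 / η) • (z k - x (k + 1)) = gradient f (x (k + 1)) + gradient g (z k)

theorem IsInertialProxEpoch.sub_le {f g : E → ℝ} {Lf Lg θ η : ℝ} {N : ℕ} {x z : ℕ → E}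
    (hE : IsInertialProxEpoch f g θ η N x z) (hf : Differentiable ℝ f) (hg : Differentiable ℝ g)
    (hflip : ∀ a b, ‖gradient f a - gradient f b‖ ≤ Lf * ‖a - b‖)
    (hglip : ∀ a b, ‖gradient g a - gradient g b‖ ≤ Lg * ‖a - b‖) (hLg : 0 ≤ Lg)
    (hθ : |1 - θ| ≤ 1) (hη : 0 < η) :
    f (x N) + g (x N) - (f (x 0) + g (x 0)) ≤
      (Lf + 2 * Lg) / 2 * ∑ k ∈ range N, ‖x (k + 1) - x k‖ ^ 2
      + (Lg / 2 - 1 / η / 2) * ∑ k ∈ range N, ‖z k - x (k + 1)‖ ^ 2 := by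
  set c := 1 / η
  have hstep (k : ℕ) (hk : k ∈ range N) : f (x (k + 1)) + g (x (k + 1)) - (f (x k) + g (x k)) ≤
      c / 2 * ‖x k - x (k - 1)‖ ^ 2 + ((Lf + 2 * Lg) / 2 - c / 2) * ‖x (k + 1) - x k‖ ^ 2
        + (Lg / 2 - c / 2) * ‖z k - x (k + 1)‖ ^ 2 := by
    rw [mem_range] at hk
    have hinertia : ‖z k - x k‖ ≤ ‖x k - x (k - 1)‖ := by
      rw [hE.extrapolate k hk, add_sub_cancel_left, norm_smul, Real.norm_eq_abs]
      exact mul_le_of_le_one_left (norm_nonneg _) hθ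
    have := sub_le_of_forward_backward_step hf hg hflip hglip hLg (a := x k) (hE.prox_grad k hk)
    have : c / 2 * ‖z k - x k‖ ^ 2 ≤ c / 2 * ‖x k - x (k - 1)‖ ^ 2 := by gcongr
    linarith
  have hshift := sum_range_norm_sub_pred_sq_le x N
  calc f (x N) + g (x N) - (f (x 0) + g (x 0))
      = ∑ k ∈ range N, (f (x (k + 1)) + g (x (k + 1)) - (f (x k) + g (x k))) :=
        (sum_range_sub (fun k => f (x k) + g (x k)) N).symm
    _ ≤ c / 2 * ∑ k ∈ range N, ‖x k - x (k - 1)‖ ^ 2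
        + ((Lf + 2 * Lg) / 2 - c / 2) * ∑ k ∈ range N, ‖x (k + 1) - x k‖ ^ 2
        + (Lg / 2 - c / 2) * ∑ k ∈ range N, ‖z k - x (k + 1)‖ ^ 2 := by
      simpa only [mul_sum, ← sum_add_distrib] using sum_le_sum hstep
    _ ≤ _ := by
      have : c / 2 * ∑ k ∈ range N, ‖x k - x (k - 1)‖ ^ 2
          ≤ c / 2 * ∑ k ∈ range N, ‖x (k + 1) - x k‖ ^ 2 := by gcongr
      linarith

end

theorem inertial_prox_epoch_decrease_general
    {d : ℕ} (hd : 1 ≤ d)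
    (f g : EuclideanSpace ℝ (Fin d) → ℝ) (Lf Lg L : ℝ)
    (hLdef : L = Lf + Lg) (hL : 0 < L)
    (hfd : Differentiable ℝ f) (hgd : Differentiable ℝ g)
    (hflip : ∀ a b : EuclideanSpace ℝ (Fin d),
      ‖gradient f a - gradient f b‖ ≤ Lf * ‖a - b‖)
    (hglip : ∀ a b : EuclideanSpace ℝ (Fin d),
      ‖gradient g a - gradient g b‖ ≤ Lg * ‖a - b‖)
    (θ η : ℝ) (hθ0 : 0 < θ) (hθ1 : θ ≤ 1) (hη0 : 0 < η) (hη1 : η ≤ 1 / L)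
    (𝒦 : ℕ)
    (x z : ℕ → EuclideanSpace ℝ (Fin d))
    (hz : ∀ k < 𝒦, z k = x k + (1 - θ) • (x k - x (k - 1)))
    (hchar : ∀ k < 𝒦,
      (1 / η) • (z k - x (k + 1)) = gradient f (x (k + 1)) + gradient g (z k)) :
    (f (x 𝒦) + g (x 𝒦)) - (f (x 0) + g (x 0)) ≤
      (1 / 2) * (1 / η + L) * ∑ k ∈ Finset.range 𝒦, ‖x (k + 1) - x k‖ ^ 2
      - (1 / (2 * η) - Lf ^ 2 / (2 * L) - (3 / 2) * L)
        * ∑ k ∈ Finset.range 𝒦, ‖z k - x (k + 1)‖ ^ 2 := by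
  have : Nonempty (Fin d) := ⟨⟨0, hd⟩⟩
  have hLf := nonneg_of_forall_norm_sub_le_mul hflip
  have hLg := nonneg_of_forall_norm_sub_le_mul hglip
  have hLη : L ≤ 1 / η := (le_one_div hη0 hL).mp hη1
  have hepoch := IsInertialProxEpoch.sub_le ⟨hz, hchar⟩ hfd hgd hflip hglip hLg
    (abs_le.mpr ⟨by linarith, by linarith⟩) hη0
  have hsteps : (Lf + 2 * Lg) / 2 * ∑ k ∈ range 𝒦, ‖x (k + 1) - x k‖ ^ 2
      ≤ 1 / 2 * (1 / η + L) * ∑ k ∈ range 𝒦, ‖x (k + 1) - x k‖ ^ 2 := by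
    gcongr; linarith
  have hresiduals : (Lg / 2 - 1 / η / 2) * ∑ k ∈ range 𝒦, ‖z k - x (k + 1)‖ ^ 2
      ≤ -(1 / (2 * η) - Lf ^ 2 / (2 * L) - 3 / 2 * L) * ∑ k ∈ range 𝒦, ‖z k - x (k + 1)‖ ^ 2 := by
    have : 0 ≤ Lf ^ 2 / (2 * L) := by positivity
    have : 1 / (2 * η) = 1 / η / 2 := by ring
    gcongr
    linarith
  linarith

/-- Decrease estimate along an inertial proximal epoch
(the convention `x^{-1} = x^0` is realized by truncated subtraction on `ℕ`). -/
theorem inertial_prox_epoch_decrease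
    {d : ℕ} (hd : 1 ≤ d)
    (f g : EuclideanSpace ℝ (Fin d) → ℝ) (Lf Lg L : ℝ)
    (hLdef : L = Lf + Lg) (hL : 0 < L)
    (hfd : Differentiable ℝ f) (hgd : Differentiable ℝ g)
    (hflip : ∀ a b : EuclideanSpace ℝ (Fin d),
      ‖gradient f a - gradient f b‖ ≤ Lf * ‖a - b‖)
    (hglip : ∀ a b : EuclideanSpace ℝ (Fin d),
      ‖gradient g a - gradient g b‖ ≤ Lg * ‖a - b‖)
    (θ η : ℝ) (hθ0 : 0 < θ) (hθ1 : θ ≤ 1) (hη0 : 0 < η) (hη1 : η ≤ 1 / L)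
    (𝒦 : ℕ) (h𝒦 : 1 ≤ 𝒦)
    (x z : ℕ → EuclideanSpace ℝ (Fin d))
    (hz : ∀ k < 𝒦, z k = x k + (1 - θ) • (x k - x (k - 1)))
    (hchar : ∀ k < 𝒦,
      (1 / η) • (z k - x (k + 1)) = gradient f (x (k + 1)) + gradient g (z k)) :
    (f (x 𝒦) + g (x 𝒦)) - (f (x 0) + g (x 0)) ≤
      (1 / 2) * (1 / η + L) * ∑ k ∈ Finset.range 𝒦, ‖x (k + 1) - x k‖ ^ 2
      - (1 / (2 * η) - Lf ^ 2 / (2 * L) - (3 / 2) * L)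
        * ∑ k ∈ Finset.range 𝒦, ‖z k - x (k + 1)‖ ^ 2 :=
  inertial_prox_epoch_decrease_general hd f g Lf Lg L hLdef hL hfd hgd hflip hglip θ η hθ0 hθ1 hη0
    hη1 𝒦 x z hz hchar
end

section
/- (Inexact inertial forward–backward decrease for a separable quadratic model.) Let θ ∈ (0,1], L > 0, 0 < η ≤ 1/(8L), ρ > 0, B ≥ 0. Let Λ ∈ ℝ^{d×d} be a diagonal matrix whose every diagonal entry λ_j satisfies −θ/η ≤ λ_j ≤ L, let x̃⁰, b ∈ ℝ^d, and set ĝ(x) = ⟨b, x − x̃⁰⟩ + (1/2)·⟨Λ(x − x̃⁰), x − x̃⁰⟩. Let f̂ : ℝ^d → ℝ be differentiable and convex and set F̂ = f̂ + ĝ. Let x̃^{−1} = x̃⁰, x̃¹, …, x̃^𝒦, z̃⁰, …, z̃^{𝒦−1}, and error vectors δ⁰, …, δ^{𝒦−1} ∈ ℝ^d with ‖δ^k‖ ≤ (9/2)·ρ·B², satisfy z̃^k = x̃^k + (1−θ)(x̃^k − x̃^{k−1}) and x̃^{k+1} = z̃^k − η·∇ĝ(z̃^k) − η·∇f̂(x̃^{k+1})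 + η·δ^k for k = 0,…,𝒦−1 (𝒦 ≥ 1). Then F̂(x̃^𝒦) ≤ F̂(x̃⁰) − (3θ/(8η))·Σ_{k=0}^{𝒦−1}‖x̃^{k+1} − x̃^k‖² + 81·η·ρ²·B⁴·𝒦/(2θ). -/
/-!
Write `F = f + g` with `g` the quadratic model of Hessian `A` and `Q u = ‖u‖² / η - ⟪A u, u⟫`,
which is nonnegative because `A ≤ 1 / η`. The inertial energy
`Φₖ = F xₖ + (1 - θ) / 2 * Q (xₖ - xₖ₋₁)` drops by `3θ / (8η) * ‖xₖ₊₁ - xₖ‖²` in each step, up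
to the error `2η / θ * ‖δₖ‖²`. One step combines the first-order convexity inequality for `f` at
`xₖ₊₁` (where the step equation identifies `∇f`), the exact second-order expansion of `g` around
`zₖ`, the Cauchy–Schwarz bound `2 B(u, v) ≤ Q u + Q v` for the bilinear form `B` of `Q`, Young's
inequality for the error, and `(1 - 2θ) Q u ≤ (1 - θ) / η * ‖u‖²`, which is where `A ≥ -θ / η`
enters. Summing telescopes, with `Φ₀ = F x₀` and `F xₖ ≤ Φₖ`.
-/

open Set Finset
open scoped RealInnerProductSpace

theorem ConvexOn.add_fderiv_sub_le {E : Type*} [NormedAddCommGroup E] [NormedSpace ℝ E]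
    {f : E → ℝ} (hf : ConvexOn ℝ univ f) {v : E} (hfv : DifferentiableAt ℝ f v) (u : E) :
    f v + fderiv ℝ f v (u - v) ≤ f u := by
  have hline : HasDerivAt (fun t : ℝ => v + t • (u - v)) (u - v) 0 := by
    simpa using ((hasDerivAt_id (0 : ℝ)).smul_const (u - v)).const_add v
  have hder : HasDerivAt (fun t : ℝ => f (v + t • (u - v))) (fderiv ℝ f v (u - v)) 0 :=
    hfv.hasFDerivAt.comp_hasDerivAt_of_eq 0 hline (by simp)
  have hconv : ConvexOn ℝ univ (fun t : ℝ => f (v + t • (u - v))) := by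
    simpa [Function.comp_def, AffineMap.lineMap_apply_module', add_comm]
      using hf.comp_affineMap (AffineMap.lineMap v u)
  have := hconv.le_slope_of_hasDerivAt (mem_univ 0) (mem_univ 1) one_pos hder
  simp only [slope_def_field, one_smul, zero_smul, add_zero, sub_zero, div_one,
    add_sub_cancel] at this
  linarith

theorem le_sub_sum_add_mul_of_forall_lt {Φ a : ℕ → ℝ} {e : ℝ} {K : ℕ}
    (h : ∀ k < K, Φ (k + 1) ≤ Φ k - a k + e) :
    Φ K ≤ Φ 0 - ∑ k ∈ range K, a k + K * e := by
  induction K with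
  | zero => simp
  | succ K ih =>
    rw [sum_range_succ]
    push_cast
    linarith [ih fun k hk => h k (by omega), h K (by omega)]

section Quadratic

variable {E : Type*} [NormedAddCommGroup E] [InnerProductSpace ℝ E]

noncomputable def quadraticModel (A : E →L[ℝ] E) (b x₀ : E) (w : E) : ℝ :=
  ⟪b, w - x₀⟫ + 1 / 2 * ⟪A (w - x₀), w - x₀⟫

variable {A : E →L[ℝ] E} (hA : (A : E →ₗ[ℝ] E).IsSymmetric) (b x₀ : E)
include hA

theorem LinearMap.IsSymmetric.real_inner_apply_swap (p q : E) : ⟪A p, q⟫ = ⟪A q, p⟫ := by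
  rw [hA.apply_clm, real_inner_comm]

theorem hasGradientAt_quadraticModel [CompleteSpace E] (w : E) :
    HasGradientAt (quadraticModel A b x₀) (b + A (w - x₀)) w := by
  have hsub : HasFDerivAt (fun v : E => v - x₀) (ContinuousLinearMap.id ℝ E) w :=
    (hasFDerivAt_id w).sub_const x₀
  have h := ((hasFDerivAt_const b w).inner ℝ hsub).add
    (((A.hasFDerivAt.comp w hsub).inner ℝ hsub).const_mul (1 / 2 : ℝ))
  rw [hasGradientAt_iff_hasFDerivAt]
  refine h.congr_fderiv (ContinuousLinearMap.ext fun v => ?_)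
  simp only [add_apply, ContinuousLinearMap.comp_apply, smul_apply, fderivInnerCLM_apply,
    ContinuousLinearMap.prod_apply, zero_apply, ContinuousLinearMap.id_apply, Function.comp_apply,
    InnerProductSpace.toDual_apply_apply, inner_zero_left, inner_add_left, smul_eq_mul]
  rw [hA.real_inner_apply_swap v]
  ring

theorem quadraticModel_add_sub (x u w : E) :
    quadraticModel A b x₀ (x + u) - quadraticModel A b x₀ x
      = ⟪b + A (x + w - x₀), u⟫ + 1 / 2 * ⟪A u, u⟫ - ⟪A w, u⟫ := by
  have h₁ := hA.real_inner_apply_swap (x - x₀) u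
  simp only [quadraticModel, show x + u - x₀ = (x - x₀) + u by abel,
    show x + w - x₀ = (x - x₀) + w by abel, map_add, inner_add_left, inner_add_right]
  linarith

end Quadratic

section InertialStep

variable {E : Type*} [NormedAddCommGroup E] [InnerProductSpace ℝ E]

noncomputable def gapForm (A : E →L[ℝ] E) (η : ℝ) (u : E) : ℝ := ‖u‖ ^ 2 / η - ⟪A u, u⟫

noncomputable def inertialEnergy (F : E → ℝ) (A : E →L[ℝ] E) (η θ : ℝ) (p q : E) : ℝ :=
  F q + (1 - θ) / 2 * gapForm A η (q - p)

variable {A : E →L[ℝ] E} {η : ℝ}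

theorem gapForm_nonneg (hAη : ∀ u, ⟪A u, u⟫ ≤ ‖u‖ ^ 2 / η) (u : E) : 0 ≤ gapForm A η u :=
  sub_nonneg.2 (hAη u)

theorem two_mul_inner_sub_le_gapForm_add (hA : (A : E →ₗ[ℝ] E).IsSymmetric)
    (hAη : ∀ u, ⟪A u, u⟫ ≤ ‖u‖ ^ 2 / η) (u v : E) :
    2 * (⟪u, v⟫ / η - ⟪A u, v⟫) ≤ gapForm A η u + gapForm A η v := by
  have h := gapForm_nonneg hAη (u - v)
  rw [gapForm, norm_sub_sq_real, hA.real_inner_apply_swap] at h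
  simp only [map_sub, inner_sub_left, inner_sub_right, add_div, sub_div, mul_div_assoc] at h
  rw [hA.real_inner_apply_swap v u] at h
  unfold gapForm
  linarith

theorem forwardBackward_step_sub_le [CompleteSpace E] {f : E → ℝ} (hf : ConvexOn ℝ univ f)
    (hA : (A : E →ₗ[ℝ] E).IsSymmetric) (hη : η ≠ 0) {b x₀ x z y δ : E}
    (hfx : DifferentiableAt ℝ f y)
    (hstep : y = z - η • (b + A (z - x₀)) - η • gradient f y + η • δ) :
    (f + quadraticModel A b x₀) y - (f + quadraticModel A b x₀) x
      ≤ ⟪z - x, y - x⟫ / η - ⟪A (z - x), y - x⟫ - ‖y - x‖ ^ 2 / η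
        + 1 / 2 * ⟪A (y - x), y - x⟫ + ⟪δ, y - x⟫ := by
  have hf₁ := hf.add_fderiv_sub_le hfx x
  rw [← inner_gradient_left, show x - y = -(y - x) by abel, inner_neg_right] at hf₁
  have hg := quadraticModel_add_sub hA b x₀ x (y - x) (z - x)
  rw [add_sub_cancel, add_sub_cancel] at hg
  have hgrad : η • gradient f y = (z - x) - (y - x) - η • (b + A (z - x₀)) + η • δ := by
    linear_combination (norm := module) hstep
  set u := y - x
  set w := z - x
  set G := b + A (z - x₀)
  have hgrad_u := congrArg (fun v => ⟪v, u⟫) hgrad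
  simp only [inner_sub_left, inner_add_left, real_inner_smul_left, real_inner_self_eq_norm_sq]
    at hgrad_u
  have hgrad_inner : ⟪gradient f y, u⟫ = (⟪w, u⟫ - ‖u‖ ^ 2) / η - ⟪G, u⟫ + ⟪δ, u⟫ := by
    field_simp
    linarith
  simp only [Pi.add_apply, sub_div] at hgrad_inner ⊢
  linarith

theorem inertialEnergy_step_le [CompleteSpace E] {f : E → ℝ} (hf : ConvexOn ℝ univ f)
    (hA : (A : E →ₗ[ℝ] E).IsSymmetric) {θ : ℝ} (hθ₀ : 0 < θ) (hθ₁ : θ ≤ 1) (hη : 0 < η)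
    (hAlo : ∀ u, -θ / η * ‖u‖ ^ 2 ≤ ⟪A u, u⟫) (hAhi : ∀ u, ⟪A u, u⟫ ≤ ‖u‖ ^ 2 / η)
    {b x₀ w x z y δ : E} (hfy : DifferentiableAt ℝ f y) (hz : z = x + (1 - θ) • (x - w))
    (hstep : y = z - η • (b + A (z - x₀)) - η • gradient f y + η • δ) :
    inertialEnergy (f + quadraticModel A b x₀) A η θ x y
      ≤ inertialEnergy (f + quadraticModel A b x₀) A η θ w x
        - 3 * θ / (8 * η) * ‖y - x‖ ^ 2 + 2 * η / θ * ‖δ‖ ^ 2 := by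
  unfold inertialEnergy
  have hfb := forwardBackward_step_sub_le (x := x) hf hA hη.ne' hfy hstep
  rw [show z - x = (1 - θ) • (x - w) by rw [hz]; abel] at hfb
  simp only [map_smul, real_inner_smul_left] at hfb
  set u := y - x
  set v := x - w
  have hcross := mul_le_mul_of_nonneg_left (two_mul_inner_sub_le_gapForm_add hA hAhi v u)
    (sub_nonneg.2 hθ₁)
  have hyoung : ⟪δ, u⟫ ≤ θ / (8 * η) * ‖u‖ ^ 2 + 2 * η / θ * ‖δ‖ ^ 2 := by
    have hsq : θ / (8 * η) * ‖u‖ ^ 2 + 2 * η / θ * ‖δ‖ ^ 2 - ‖δ‖ * ‖u‖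
        = (θ * ‖u‖ - 4 * η * ‖δ‖) ^ 2 / (8 * η * θ) := by
      field_simp
      ring
    have : 0 ≤ (θ * ‖u‖ - 4 * η * ‖δ‖) ^ 2 / (8 * η * θ) := by positivity
    linarith [real_inner_le_norm δ u]
  have hgap : (1 - 2 * θ) * gapForm A η u ≤ (1 - θ) / η * ‖u‖ ^ 2 := by
    have hlo : -θ * (‖u‖ ^ 2 / η) ≤ ⟪A u, u⟫ := by
      simpa only [div_mul_eq_mul_div, mul_div_assoc] using hAlo u
    rw [gapForm, div_mul_eq_mul_div, mul_div_assoc]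
    nlinarith [mul_nonneg (sub_nonneg.2 hθ₁) (by linarith : 0 ≤ ⟪A u, u⟫ + θ * (‖u‖ ^ 2 / η)),
      mul_nonneg (sq_nonneg θ) (sub_nonneg.2 (hAhi u))]
  unfold gapForm at hcross hgap ⊢
  simp only [Pi.add_apply] at hfb ⊢
  linear_combination hfb + hcross / 2 + hgap / 2 + hyoung

theorem add_quadraticModel_le_of_inertial_iterates [CompleteSpace E] {f : E → ℝ}
    (hf : ConvexOn ℝ univ f) (hfd : Differentiable ℝ f) (hA : (A : E →ₗ[ℝ] E).IsSymmetric) {θ : ℝ} (hθ₀ : 0 < θ)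
    (hθ₁ : θ ≤ 1) (hη : 0 < η) (hAlo : ∀ u, -θ / η * ‖u‖ ^ 2 ≤ ⟪A u, u⟫)
    (hAhi : ∀ u, ⟪A u, u⟫ ≤ ‖u‖ ^ 2 / η) {b x₀ : E} {K : ℕ} {x z δ : ℕ → E} {ε : ℝ}
    (hδ : ∀ k < K, ‖δ k‖ ≤ ε) (hz : ∀ k < K, z k = x k + (1 - θ) • (x k - x (k - 1)))
    (hstep : ∀ k < K, x (k + 1) = z k - η • gradient (quadraticModel A b x₀) (z k)
      - η • gradient f (x (k + 1)) + η • δ k) :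
    (f + quadraticModel A b x₀) (x K) ≤ (f + quadraticModel A b x₀) (x 0)
      - 3 * θ / (8 * η) * ∑ k ∈ range K, ‖x (k + 1) - x k‖ ^ 2 + K * (2 * η / θ * ε ^ 2) := by
  -- `k - 1` truncates at `k = 0`, so `Φ 0 = F (x 0)`.
  set Φ : ℕ → ℝ := fun k => inertialEnergy (f + quadraticModel A b x₀) A η θ (x (k - 1)) (x k)
  have hΦ (k : ℕ) (hk : k < K) :
      Φ (k + 1) ≤ Φ k - 3 * θ / (8 * η) * ‖x (k + 1) - x k‖ ^ 2 + 2 * η / θ * ε ^ 2 := by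
    have hstep' := hstep k hk
    rw [(hasGradientAt_quadraticModel hA b x₀ (z k)).gradient] at hstep'
    have hδ' : ‖δ k‖ ^ 2 ≤ ε ^ 2 := pow_le_pow_left₀ (norm_nonneg _) (hδ k hk) 2
    have := inertialEnergy_step_le hf hA hθ₀ hθ₁ hη hAlo hAhi (hfd _) (hz k hk) hstep'
    simp only [Φ, Nat.add_sub_cancel]
    linear_combination this + 2 * η / θ * hδ'
  have hΦ₀ : Φ 0 = (f + quadraticModel A b x₀) (x 0) := by simp [Φ, inertialEnergy, gapForm]
  have hΦK : (f + quadraticModel A b x₀) (x K) ≤ Φ K :=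
    le_add_of_nonneg_right (mul_nonneg (by linarith) (gapForm_nonneg hAhi _))
  have hsum := le_sub_sum_add_mul_of_forall_lt hΦ
  rw [← mul_sum] at hsum
  linarith

end InertialStep

section Diagonal

open Matrix

variable {ι : Type*} [Fintype ι] [DecidableEq ι] (lam : ι → ℝ)

theorem toEuclideanCLM_diagonal_apply (u : EuclideanSpace ℝ ι) :
    toEuclideanCLM (𝕜 := ℝ) (diagonal lam) u
      = (EuclideanSpace.equiv ι ℝ).symm fun j => lam j * u j := by
  ext j
  simp [mulVec_diagonal]

theorem isSymmetric_toEuclideanCLM_diagonal :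
    (toEuclideanCLM (𝕜 := ℝ) (diagonal lam) : EuclideanSpace ℝ ι →ₗ[ℝ] _).IsSymmetric :=
  isSymmetric_toEuclideanLin_iff.2 (isHermitian_diagonal lam)

theorem inner_toEuclideanCLM_diagonal_self (u : EuclideanSpace ℝ ι) :
    ⟪toEuclideanCLM (𝕜 := ℝ) (diagonal lam) u, u⟫ = ∑ j, lam j * u j ^ 2 := by
  rw [real_inner_comm, inner_toEuclideanCLM, dotProduct]
  simp only [mulVec_diagonal]
  exact sum_congr rfl fun j _ => by ring

theorem mul_norm_sq_le_inner_toEuclideanCLM_diagonal {c : ℝ} (h : ∀ j, c ≤ lam j)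
    (u : EuclideanSpace ℝ ι) : c * ‖u‖ ^ 2 ≤ ⟪toEuclideanCLM (𝕜 := ℝ) (diagonal lam) u, u⟫ := by
  simp only [inner_toEuclideanCLM_diagonal_self, EuclideanSpace.norm_sq_eq, Real.norm_eq_abs,
    sq_abs, mul_sum]
  gcongr with j
  exact h j

theorem inner_toEuclideanCLM_diagonal_le_mul_norm_sq {c : ℝ} (h : ∀ j, lam j ≤ c)
    (u : EuclideanSpace ℝ ι) : ⟪toEuclideanCLM (𝕜 := ℝ) (diagonal lam) u, u⟫ ≤ c * ‖u‖ ^ 2 := by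
  simp only [inner_toEuclideanCLM_diagonal_self, EuclideanSpace.norm_sq_eq, Real.norm_eq_abs,
    sq_abs, mul_sum]
  gcongr with j
  exact h j

end Diagonal

theorem inexact_inertial_fb_quadratic_decrease_general
    {d : ℕ}
    (θ L η ρ B : ℝ)
    (hθ0 : 0 < θ) (hθ1 : θ ≤ 1) (hL : 0 < L)
    (hη0 : 0 < η) (hη1 : η ≤ 1 / (8 * L))
    (lam : Fin d → ℝ) (hlam : ∀ j, -θ / η ≤ lam j ∧ lam j ≤ L)
    (xt0 b : EuclideanSpace ℝ (Fin d))
    (fHat gHat : EuclideanSpace ℝ (Fin d) → ℝ)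
    (hgdef : ∀ w : EuclideanSpace ℝ (Fin d),
      gHat w = (inner ℝ b (w - xt0) : ℝ)
        + (1 / 2) * (inner ℝ
            ((EuclideanSpace.equiv (Fin d) ℝ).symm fun j => lam j * (w - xt0) j)
            (w - xt0) : ℝ))
    (hfdiff : Differentiable ℝ fHat)
    (hfconv : ConvexOn ℝ Set.univ fHat)
    (𝒦 : ℕ)
    (x z δ : ℕ → EuclideanSpace ℝ (Fin d))
    (hδ : ∀ k < 𝒦, ‖δ k‖ ≤ (9 / 2) * ρ * B ^ 2)
    (hz : ∀ k < 𝒦, z k = x k + (1 - θ) • (x k - x (k - 1)))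
    (hstep : ∀ k < 𝒦,
      x (k + 1) = z k - η • gradient gHat (z k) - η • gradient fHat (x (k + 1))
        + η • δ k) :
    fHat (x 𝒦) + gHat (x 𝒦) ≤ fHat (x 0) + gHat (x 0)
      - (3 * θ / (8 * η)) * ∑ k ∈ Finset.range 𝒦, ‖x (k + 1) - x k‖ ^ 2
      + 81 * η * ρ ^ 2 * B ^ 4 * 𝒦 / (2 * θ) := by
  set D := Matrix.toEuclideanCLM (𝕜 := ℝ) (Matrix.diagonal lam)
  obtain rfl : gHat = quadraticModel D b xt0 := funext fun w => by
    rw [hgdef, quadraticModel, toEuclideanCLM_diagonal_apply]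
  have hlam_le (j : Fin d) : lam j ≤ 1 / η := (hlam j).2.trans <| by
    rw [le_div_iff₀ hη0]
    rw [le_div_iff₀ (by positivity)] at hη1
    nlinarith
  have hDhi (u : EuclideanSpace ℝ (Fin d)) : ⟪D u, u⟫ ≤ ‖u‖ ^ 2 / η := by
    simpa only [one_div_mul_eq_div] using
      inner_toEuclideanCLM_diagonal_le_mul_norm_sq lam hlam_le u
  have := add_quadraticModel_le_of_inertial_iterates hfconv hfdiff
    (isSymmetric_toEuclideanCLM_diagonal lam) hθ0 hθ1 hη0
    (mul_norm_sq_le_inner_toEuclideanCLM_diagonal lam fun j => (hlam j).1) hDhi hδ hz hstep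
  simp only [Pi.add_apply] at this
  linear_combination this

/-- Inexact inertial forward–backward decrease for a separable
quadratic model.  The diagonal matrix `Λ` is given by its diagonal entries
`lam : Fin d → ℝ`, acting coordinatewise on `EuclideanSpace ℝ (Fin d)`
(the convention `x̃^{-1} = x̃^0` is realized by truncated subtraction on `ℕ`). -/
theorem inexact_inertial_fb_quadratic_decrease
    {d : ℕ} (hd : 1 ≤ d)
    (θ L η ρ B : ℝ)
    (hθ0 : 0 < θ) (hθ1 : θ ≤ 1) (hL : 0 < L)
    (hη0 : 0 < η) (hη1 : η ≤ 1 / (8 * L))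
    (hρ : 0 < ρ) (hB : 0 ≤ B)
    (lam : Fin d → ℝ) (hlam : ∀ j, -θ / η ≤ lam j ∧ lam j ≤ L)
    (xt0 b : EuclideanSpace ℝ (Fin d))
    (fHat gHat : EuclideanSpace ℝ (Fin d) → ℝ)
    (hgdef : ∀ w : EuclideanSpace ℝ (Fin d),
      gHat w = (inner ℝ b (w - xt0) : ℝ)
        + (1 / 2) * (inner ℝ
            ((EuclideanSpace.equiv (Fin d) ℝ).symm fun j => lam j * (w - xt0) j)
            (w - xt0) : ℝ))
    (hfdiff : Differentiable ℝ fHat)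
    (hfconv : ConvexOn ℝ Set.univ fHat)
    (𝒦 : ℕ) (h𝒦 : 1 ≤ 𝒦)
    (x z δ : ℕ → EuclideanSpace ℝ (Fin d))
    (hx0 : x 0 = xt0)
    (hδ : ∀ k < 𝒦, ‖δ k‖ ≤ (9 / 2) * ρ * B ^ 2)
    (hz : ∀ k < 𝒦, z k = x k + (1 - θ) • (x k - x (k - 1)))
    (hstep : ∀ k < 𝒦,
      x (k + 1) = z k - η • gradient gHat (z k) - η • gradient fHat (x (k + 1))
        + η • δ k) :
    fHat (x 𝒦) + gHat (x 𝒦) ≤ fHat (x 0) + gHat (x 0)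
      - (3 * θ / (8 * η)) * ∑ k ∈ Finset.range 𝒦, ‖x (k + 1) - x k‖ ^ 2
      + 81 * η * ρ ^ 2 * B ^ 4 * 𝒦 / (2 * θ) :=
  inexact_inertial_fb_quadratic_decrease_general θ L η ρ B hθ0 hθ1 hL hη0 hη1 lam hlam xt0 b fHat
    gHat hgdef hfdiff hfconv 𝒦 x z δ hδ hz hstep
end

section
/- (Small gradient at the output when no restart is triggered.) Let f, g : ℝ^d → ℝ be twice differentiable with ∇f L_f-Lipschitz, Hessian of f ρ_f-Lipschitz, ∇g L_g-Lipschitz, Hessian of g ρ_g-Lipschitz; set L = L_f + L_g, ρ = ρ_f + ρ_g, F = f + g. Let ε > 0, η = 1/(8L), B = (1/2)·√(ε/ρ), θ = 4·(ε·ρ·η²)^{1/4} with θ ∈ (0,1), and let K ≥ 1 be an integer with K·θ = 1. Let x^{−1} = x⁰, x¹, …, x^K and z⁰, …, z^{K−1} be an inertial proximal epoch such that the restart criterion is never triggered: for every k ∈ {1,…,K}, k·Σ_{t=0}^{k−1}‖x^{t+1} − x^t‖² ≤ B². Let K₀ ∈ {⌊K/2⌋, …, K−1} be such that ‖x^{K₀+1}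 − x^{K₀}‖ ≤ ‖x^{k+1} − x^k‖ for every k ∈ {⌊K/2⌋, …, K−1}, and let ẑ = (1/(K₀+1))·Σ_{k=0}^{K₀} z^k. Then ‖∇F(ẑ)‖ ≤ 45·ε. -/
/-!
Summing the optimality conditions over the first `K₀ + 1` iterations gives
`∑ (∇f(x^{k+1}) + ∇g(z^k)) = η⁻¹ ∑ (z^k - x^{k+1})`, and the right side telescopes to
`η⁻¹ ((x^{K₀} - x^{K₀+1}) - θ (x^{K₀} - x^0))`. Both pieces are `O(θ B)`: the no-restart condition
keeps the epoch in the ball of radius `B` around `x^0` (Cauchy–Schwarz), and forces the shortest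
step of the second half to be at most `√2 θ B`. Linearizing both gradients at the barycenter `ẑ`
of the `z^k`, the left side becomes `(K₀ + 1) ∇F(ẑ) + ∇²f(ẑ) ∑ (x^{k+1} - z^k)` up to Taylor
remainders of size `ρ B²`. Dividing by `K₀ + 1 ≥ 1 / (2θ)` and inserting the parameter choices
(`θ² B = 8 ε η`, `ρ B² = ε / 4`) gives `‖∇F(ẑ)‖ ≤ (18 (√2 + 1) + 9 / 8) ε`.
-/

open Finset

theorem nonneg_of_forall_norm_sub_le {E F : Type*} [NormedAddCommGroup E] [Nontrivial E]
    [SeminormedAddCommGroup F] {u : E → F} {C : ℝ} (h : ∀ a b, ‖u a - u b‖ ≤ C * ‖a - b‖) :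
    0 ≤ C := by
  obtain ⟨a, ha⟩ := exists_ne (0 : E)
  refine nonneg_of_mul_nonneg_left ((norm_nonneg _).trans (h a 0)) ?_
  simpa using ha

section Barycenter

variable {ι E : Type*} [NormedAddCommGroup E] [NormedSpace ℝ E] {s : Finset ι} {w : ι → E} {c : E}

theorem sum_sub_eq_zero_of_card_smul_eq (hc : (#s : ℝ) • c = ∑ i ∈ s, w i) :
    ∑ i ∈ s, (w i - c) = 0 := by
  rw [sum_sub_distrib, sum_const, ← Nat.cast_smul_eq_nsmul ℝ, hc, sub_self]

theorem norm_sub_le_of_card_smul_eq (hc : (#s : ℝ) • c = ∑ i ∈ s, w i) (hs : s.Nonempty)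
    {a : E} {r : ℝ} (hr : ∀ i ∈ s, ‖w i - a‖ ≤ r) : ‖c - a‖ ≤ r := by
  have hcard : (0 : ℝ) < #s := by exact_mod_cast hs.card_pos
  have hsum : (#s : ℝ) • (c - a) = ∑ i ∈ s, (w i - a) := by
    rw [sum_sub_distrib, sum_const, ← Nat.cast_smul_eq_nsmul ℝ, smul_sub, hc]
  refine le_of_mul_le_mul_left ?_ hcard
  calc (#s : ℝ) * ‖c - a‖ = ‖∑ i ∈ s, (w i - a)‖ := by
        rw [← hsum, norm_smul, Real.norm_of_nonneg hcard.le]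
    _ ≤ ∑ i ∈ s, ‖w i - a‖ := norm_sum_le _ _
    _ ≤ #s * r := by simpa using sum_le_sum hr

end Barycenter

section Variance

variable {ι E : Type*} [NormedAddCommGroup E] [InnerProductSpace ℝ E] {s : Finset ι} {w : ι → E}
  {c : E}

theorem sum_norm_sub_sq_le_of_card_smul_eq (hc : (#s : ℝ) • c = ∑ i ∈ s, w i) (a : E) :
    ∑ i ∈ s, ‖w i - c‖ ^ 2 ≤ ∑ i ∈ s, ‖w i - a‖ ^ 2 := by
  have hsplit : ∀ i ∈ s, ‖w i - a‖ ^ 2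
      = ‖w i - c‖ ^ 2 + 2 * inner ℝ (w i - c) (c - a) + ‖c - a‖ ^ 2 := fun i _ => by
    rw [← norm_add_sq_real, sub_add_sub_cancel]
  rw [sum_congr rfl hsplit, sum_add_distrib, sum_add_distrib, ← mul_sum, ← sum_inner,
    sum_sub_eq_zero_of_card_smul_eq hc, inner_zero_left, mul_zero, add_zero]
  exact le_add_of_nonneg_right (sum_nonneg fun _ _ => sq_nonneg _)

theorem sum_norm_sub_sq_le_card_mul_of_card_smul_eq (hc : (#s : ℝ) • c = ∑ i ∈ s, w i) {a : E}
    {r : ℝ} (hr : ∀ i ∈ s, ‖w i - a‖ ≤ r) : ∑ i ∈ s, ‖w i - c‖ ^ 2 ≤ #s * r ^ 2 := by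
  refine (sum_norm_sub_sq_le_of_card_smul_eq hc a).trans ?_
  simpa using sum_le_sum fun i hi => pow_le_pow_left₀ (norm_nonneg _) (hr i hi) 2

theorem sum_norm_sub_sq_le_card_mul_add_sq_of_card_smul_eq (hc : (#s : ℝ) • c = ∑ i ∈ s, w i)
    {p : ι → E} {a : E} {r r' : ℝ} (hr : ∀ i ∈ s, ‖w i - a‖ ≤ r) (hr' : ∀ i ∈ s, ‖p i - a‖ ≤ r') :
    ∑ i ∈ s, ‖p i - c‖ ^ 2 ≤ #s * (r' + r) ^ 2 := by
  have hca : ∀ i ∈ s, ‖p i - c‖ ≤ r' + r := fun i hi =>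
    (norm_sub_le_norm_sub_add_norm_sub _ a _).trans (add_le_add (hr' i hi)
      (by rw [norm_sub_rev]; exact norm_sub_le_of_card_smul_eq hc ⟨i, hi⟩ hr))
  simpa using sum_le_sum fun i hi => pow_le_pow_left₀ (norm_nonneg _) (hca i hi) 2

end Variance

section Taylor

variable {ι E F : Type*} [NormedAddCommGroup E] [NormedSpace ℝ E]
  [NormedAddCommGroup F] [NormedSpace ℝ F]

theorem norm_sub_sub_fderiv_le_of_lipschitz_fderiv {u : E → F} (hu : Differentiable ℝ u)
    {ρ : ℝ} (hρ : ∀ a b, ‖fderiv ℝ u a - fderiv ℝ u b‖ ≤ ρ * ‖a - b‖) (p q : E) :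
    ‖u q - u p - fderiv ℝ u p (q - p)‖ ≤ ρ / 2 * ‖q - p‖ ^ 2 := by
  set v := q - p
  set ψ : ℝ → F := fun t => u (p + t • v) - u p - t • fderiv ℝ u p v
  have hψ : ∀ t : ℝ, HasDerivAt ψ (fderiv ℝ u (p + t • v) v - fderiv ℝ u p v) t := by
    intro t
    have hline : HasDerivAt (fun s : ℝ => p + s • v) v t := by
      simpa using ((hasDerivAt_id t).smul_const v).const_add p
    have hlin : HasDerivAt (fun s : ℝ => s • fderiv ℝ u p v) (fderiv ℝ u p v) t := by
      simpa using (hasDerivAt_id t).smul_const (fderiv ℝ u p v)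
    exact (((hu _).hasFDerivAt.comp_hasDerivAt t hline).sub_const (u p)).sub hlin
  have hbound : ∀ t : ℝ, HasDerivAt (fun t : ℝ => ρ / 2 * ‖v‖ ^ 2 * t ^ 2)
      (ρ / 2 * ‖v‖ ^ 2 * (2 * t)) t := fun t => by
    simpa using (hasDerivAt_pow 2 t).const_mul (ρ / 2 * ‖v‖ ^ 2)
  have hderiv : ∀ t ∈ Set.Ico (0 : ℝ) 1,
      ‖fderiv ℝ u (p + t • v) v - fderiv ℝ u p v‖ ≤ ρ / 2 * ‖v‖ ^ 2 * (2 * t) := by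
    intro t ht
    calc ‖fderiv ℝ u (p + t • v) v - fderiv ℝ u p v‖
        = ‖(fderiv ℝ u (p + t • v) - fderiv ℝ u p) v‖ := rfl
      _ ≤ ρ * ‖p + t • v - p‖ * ‖v‖ := ((fderiv ℝ u _ - _).le_opNorm v).trans
          (mul_le_mul_of_nonneg_right (hρ _ _) (norm_nonneg v))
      _ = ρ / 2 * ‖v‖ ^ 2 * (2 * t) := by
          rw [add_sub_cancel_left, norm_smul, Real.norm_of_nonneg ht.1]; ring
  have key := image_norm_le_of_norm_deriv_right_le_deriv_boundary
    (fun t _ => (hψ t).continuousAt.continuousWithinAt) (fun t _ => (hψ t).hasDerivWithinAt)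
    (by simp [ψ]) hbound hderiv (Set.right_mem_Icc.2 zero_le_one)
  simpa [ψ, v] using key

theorem sum_norm_sub_sub_fderiv_le_of_lipschitz_fderiv {u : E → F} (hu : Differentiable ℝ u)
    {ρ : ℝ} (hρ : ∀ a b, ‖fderiv ℝ u a - fderiv ℝ u b‖ ≤ ρ * ‖a - b‖) (s : Finset ι)
    (w : ι → E) (c : E) :
    ‖∑ i ∈ s, (u (w i) - u c - fderiv ℝ u c (w i - c))‖ ≤ ρ / 2 * ∑ i ∈ s, ‖w i - c‖ ^ 2 := by
  rw [mul_sum]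
  exact (norm_sum_le _ _).trans
    (sum_le_sum fun i _ => norm_sub_sub_fderiv_le_of_lipschitz_fderiv hu hρ c (w i))

/-- Linearizing `u` and `v` at the barycenter `c` of the `q i`, the first-order terms of `v`
cancel and those of `u` only see the differences `q i - p i`. -/
theorem norm_card_smul_add_sub_le {u v : E → F} (hu : Differentiable ℝ u)
    (hv : Differentiable ℝ v) {ρu ρv : ℝ}
    (hρu : ∀ a b, ‖fderiv ℝ u a - fderiv ℝ u b‖ ≤ ρu * ‖a - b‖)
    (hρv : ∀ a b, ‖fderiv ℝ v a - fderiv ℝ v b‖ ≤ ρv * ‖a - b‖)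
    {s : Finset ι} {p q : ι → E} {c : E} (hc : (#s : ℝ) • c = ∑ i ∈ s, q i) :
    ‖(#s : ℝ) • (u c + v c) - ∑ i ∈ s, (u (p i) + v (q i))
        - fderiv ℝ u c (∑ i ∈ s, (q i - p i))‖
      ≤ ρu / 2 * ∑ i ∈ s, ‖p i - c‖ ^ 2 + ρv / 2 * ∑ i ∈ s, ‖q i - c‖ ^ 2 := by
  have hq := sum_sub_eq_zero_of_card_smul_eq hc
  have hp : ∑ i ∈ s, (p i - c) = -∑ i ∈ s, (q i - p i) := by
    rw [← sub_eq_zero, sub_neg_eq_add, ← sum_add_distrib, ← hq]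
    exact sum_congr rfl fun i _ => by abel
  have hid : (#s : ℝ) • (u c + v c) - ∑ i ∈ s, (u (p i) + v (q i))
        - fderiv ℝ u c (∑ i ∈ s, (q i - p i))
      = -(∑ i ∈ s, (u (p i) - u c - fderiv ℝ u c (p i - c))
        + ∑ i ∈ s, (v (q i) - v c - fderiv ℝ v c (q i - c))) := by
    simp only [sum_sub_distrib, ← map_sum, hp, hq, map_neg, map_zero, sum_add_distrib, sum_const,
      ← Nat.cast_smul_eq_nsmul ℝ, smul_add]
    abel
  rw [hid, norm_neg]
  exact (norm_add_le _ _).trans (add_le_add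
    (sum_norm_sub_sub_fderiv_le_of_lipschitz_fderiv hu hρu s p c)
    (sum_norm_sub_sub_fderiv_le_of_lipschitz_fderiv hv hρv s q c))

end Taylor

section Gradient

variable {ι E : Type*} [NormedAddCommGroup E] [InnerProductSpace ℝ E] [CompleteSpace E]

theorem gradient_add {f g : E → ℝ} {x : E} (hf : DifferentiableAt ℝ f x)
    (hg : DifferentiableAt ℝ g x) : gradient (f + g) x = gradient f x + gradient g x := by
  refine HasGradientAt.gradient ?_
  rw [hasGradientAt_iff_hasFDerivAt, map_add]
  exact hf.hasGradientAt.add hg.hasGradientAt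

theorem card_mul_norm_gradient_add_le {f g : E → ℝ} (hf : Differentiable ℝ f)
    (hg : Differentiable ℝ g) (hf' : Differentiable ℝ (gradient f))
    (hg' : Differentiable ℝ (gradient g)) {Lf ρf ρg η : ℝ} (hLf : 0 ≤ Lf) (hη : 0 ≤ η)
    (hfL : ∀ a b, ‖gradient f a - gradient f b‖ ≤ Lf * ‖a - b‖)
    (hfH : ∀ a b, ‖fderiv ℝ (gradient f) a - fderiv ℝ (gradient f) b‖ ≤ ρf * ‖a - b‖)
    (hgH : ∀ a b, ‖fderiv ℝ (gradient g) a - fderiv ℝ (gradient g) b‖ ≤ ρg * ‖a - b‖)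
    {s : Finset ι} {p q : ι → E} {c : E} (hc : (#s : ℝ) • c = ∑ i ∈ s, q i)
    (hstep : ∀ i ∈ s, (1 / η) • (q i - p i) = gradient f (p i) + gradient g (q i)) :
    #s * ‖gradient (f + g) c‖ ≤ (1 / η + Lf) * ‖∑ i ∈ s, (q i - p i)‖
      + (ρf / 2 * ∑ i ∈ s, ‖p i - c‖ ^ 2 + ρg / 2 * ∑ i ∈ s, ‖q i - c‖ ^ 2) := by
  have hHf : ‖fderiv ℝ (gradient f) c‖ ≤ Lf :=
    norm_fderiv_le_of_lip' ℝ hLf (Filter.Eventually.of_forall fun y => hfL y c)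
  have hsum : ∑ i ∈ s, (gradient f (p i) + gradient g (q i)) = (1 / η) • ∑ i ∈ s, (q i - p i) := by
    rw [smul_sum]; exact sum_congr rfl fun i hi => (hstep i hi).symm
  have hrem := norm_card_smul_add_sub_le hf' hg' hfH hgH (p := p) hc
  rw [hsum, sub_sub] at hrem
  set T := ∑ i ∈ s, (q i - p i)
  calc (#s : ℝ) * ‖gradient (f + g) c‖
      = ‖(#s : ℝ) • (gradient f c + gradient g c)‖ := by
        rw [gradient_add (hf c) (hg c), norm_smul, Real.norm_natCast]
    _ ≤ ‖(1 / η) • T + fderiv ℝ (gradient f) c T‖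
        + ‖(#s : ℝ) • (gradient f c + gradient g c)
          - ((1 / η) • T + fderiv ℝ (gradient f) c T)‖ := norm_le_insert' _ _
    _ ≤ (1 / η + Lf) * ‖T‖ + (ρf / 2 * ∑ i ∈ s, ‖p i - c‖ ^ 2
          + ρg / 2 * ∑ i ∈ s, ‖q i - c‖ ^ 2) := by
        refine add_le_add ?_ hrem
        refine (norm_add_le _ _).trans ?_
        rw [norm_smul, Real.norm_of_nonneg (by positivity), add_mul]
        gcongr
        exact (fderiv ℝ (gradient f) c).le_of_opNorm_le hHf T

end Gradient

theorem sum_range_succ_inertial_sub {R M : Type*} [CommRing R] [AddCommGroup M] [Module R M]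
    {x z : ℕ → M} {θ : R} {n : ℕ} (hz : ∀ k ≤ n, z k = x k + (1 - θ) • (x k - x (k - 1))) :
    ∑ k ∈ range (n + 1), (z k - x (k + 1)) = (x n - x (n + 1)) - θ • (x n - x 0) := by
  have hmom : ∑ k ∈ range (n + 1), (x k - x (k - 1)) = x n - x 0 := by
    rw [sum_range_succ', sub_self, add_zero]
    exact sum_range_sub x n
  rw [sum_congr rfl fun k hk => by rw [hz k (Nat.lt_succ_iff.1 (mem_range.1 hk))],
    sum_congr rfl fun k _ => (by abel : x k + (1 - θ) • (x k - x (k - 1)) - x (k + 1)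
      = -(x (k + 1) - x k) + (1 - θ) • (x k - x (k - 1))),
    sum_add_distrib, sum_neg_distrib, sum_range_sub, ← smul_sum, hmom]
  module

def NoRestart {E : Type*} [SeminormedAddCommGroup E] (x : ℕ → E) (K : ℕ) (B : ℝ) : Prop :=
  ∀ k, 1 ≤ k → k ≤ K → (k : ℝ) * ∑ t ∈ range k, ‖x (t + 1) - x t‖ ^ 2 ≤ B ^ 2

namespace NoRestart

variable {E : Type*} [SeminormedAddCommGroup E] {x : ℕ → E} {K : ℕ} {B : ℝ}

theorem sum_sq_le (h : NoRestart x K B) {k : ℕ} (hk : k ≤ K) :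
    ∑ t ∈ range k, ‖x (t + 1) - x t‖ ^ 2 ≤ B ^ 2 := by
  rcases Nat.eq_zero_or_pos k with rfl | hk0
  · simpa using sq_nonneg B
  refine le_trans ?_ (h k hk0 hk)
  exact le_mul_of_one_le_left (sum_nonneg fun _ _ => sq_nonneg _) (by exact_mod_cast hk0)

theorem norm_succ_sub_le (h : NoRestart x K B) (hB : 0 ≤ B) {t : ℕ} (ht : t < K) :
    ‖x (t + 1) - x t‖ ≤ B := by
  refine (pow_le_pow_iff_left₀ (norm_nonneg _) hB two_ne_zero).1 ?_
  exact (single_le_sum (f := fun u => ‖x (u + 1) - x u‖ ^ 2) (fun _ _ => sq_nonneg _)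
    (self_mem_range_succ t)).trans (h.sum_sq_le ht)

theorem norm_sub_le (h : NoRestart x K B) (hB : 0 ≤ B) {k : ℕ} (hk : k ≤ K) :
    ‖x k - x 0‖ ≤ B := by
  rcases Nat.eq_zero_or_pos k with rfl | hk0
  · simpa using hB
  rw [← sum_range_sub x k]
  refine (norm_sum_le _ _).trans ((pow_le_pow_iff_left₀ (sum_nonneg fun _ _ => norm_nonneg _)
    hB two_ne_zero).1 ?_)
  refine le_trans ?_ (h k hk0 hk)
  simpa using sq_sum_le_card_mul_sum_sq (s := range k) (f := fun t => ‖x (t + 1) - x t‖)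

/-- The shortest of the last `K - K / 2` steps carries at most a `1 / (K - K / 2) ≤ 2 / K` share
of the squared path length. -/
theorem mul_norm_succ_sub_le_of_isMin (h : NoRestart x K B) (hB : 0 ≤ B) {K₀ : ℕ}
    (hK₀ : K₀ < K) (hmin : ∀ k, K / 2 ≤ k → k < K → ‖x (K₀ + 1) - x K₀‖ ≤ ‖x (k + 1) - x k‖) :
    K * ‖x (K₀ + 1) - x K₀‖ ≤ √2 * B := by
  set m := ‖x (K₀ + 1) - x K₀‖
  have hhalf : ((K - K / 2 : ℕ) : ℝ) * m ^ 2 ≤ ∑ t ∈ range K, ‖x (t + 1) - x t‖ ^ 2 := by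
    calc ((K - K / 2 : ℕ) : ℝ) * m ^ 2 = ∑ _t ∈ Ico (K / 2) K, m ^ 2 := by simp
      _ ≤ ∑ t ∈ Ico (K / 2) K, ‖x (t + 1) - x t‖ ^ 2 := sum_le_sum fun t ht => by
          rw [mem_Ico] at ht
          exact pow_le_pow_left₀ (norm_nonneg _) (hmin t ht.1 ht.2) 2
      _ ≤ ∑ t ∈ range K, ‖x (t + 1) - x t‖ ^ 2 :=
          sum_le_sum_of_subset_of_nonneg (fun t ht => by simp_all) fun _ _ _ => sq_nonneg _
  have hK : (K : ℝ) ≤ 2 * ((K - K / 2 : ℕ) : ℝ) := by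
    exact_mod_cast (by omega : K ≤ 2 * (K - K / 2))
  have htotal := h K (by omega) le_rfl
  refine (pow_le_pow_iff_left₀ (by positivity) (by positivity) two_ne_zero).1 ?_
  rw [mul_pow, mul_pow, Real.sq_sqrt zero_le_two]
  calc (K : ℝ) ^ 2 * m ^ 2 ≤ 2 * (K * (((K - K / 2 : ℕ) : ℝ) * m ^ 2)) := by
        nlinarith [mul_le_mul_of_nonneg_right hK (by positivity : (0 : ℝ) ≤ K * m ^ 2)]
    _ ≤ 2 * B ^ 2 := by gcongr; exact (mul_le_mul_of_nonneg_left hhalf (by positivity)).trans htotal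

variable [NormedSpace ℝ E] {θ : ℝ}

theorem norm_inertial_sub_le (h : NoRestart x K B) (hB : 0 ≤ B) (hθ0 : 0 ≤ θ) (hθ1 : θ ≤ 1)
    {k : ℕ} (hk : k < K) : ‖x k + (1 - θ) • (x k - x (k - 1)) - x 0‖ ≤ 2 * B := by
  have hmom : ‖(1 - θ) • (x k - x (k - 1))‖ ≤ B := by
    rw [norm_smul, Real.norm_of_nonneg (by linarith)]
    refine (mul_le_of_le_one_left (norm_nonneg _) (by linarith)).trans ?_
    rcases Nat.eq_zero_or_pos k with rfl | hk0
    · simpa using hB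
    simpa [Nat.sub_add_cancel hk0] using h.norm_succ_sub_le hB (t := k - 1) (by omega)
  calc ‖x k + (1 - θ) • (x k - x (k - 1)) - x 0‖
      = ‖(x k - x 0) + (1 - θ) • (x k - x (k - 1))‖ := by rw [add_sub_right_comm]
    _ ≤ B + B := (norm_add_le _ _).trans (add_le_add (h.norm_sub_le hB hk.le) hmom)
    _ = 2 * B := by ring

theorem norm_sum_inertial_sub_le (h : NoRestart x K B) (hB : 0 ≤ B) (hθ0 : 0 ≤ θ)
    (hKθ : K * θ = 1) {z : ℕ → E} {K₀ : ℕ} (hK₀ : K₀ < K)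
    (hz : ∀ k ≤ K₀, z k = x k + (1 - θ) • (x k - x (k - 1)))
    (hmin : ∀ k, K / 2 ≤ k → k < K → ‖x (K₀ + 1) - x K₀‖ ≤ ‖x (k + 1) - x k‖) :
    ‖∑ k ∈ range (K₀ + 1), (z k - x (k + 1))‖ ≤ (√2 + 1) * θ * B := by
  have hlast : ‖x K₀ - x (K₀ + 1)‖ ≤ √2 * θ * B := by
    rw [norm_sub_rev, ← one_mul ‖_‖, ← hKθ, mul_right_comm, mul_assoc]
    nlinarith [h.mul_norm_succ_sub_le_of_isMin hB hK₀ hmin]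
  have hdrift : ‖θ • (x K₀ - x 0)‖ ≤ θ * B := by
    rw [norm_smul, Real.norm_of_nonneg hθ0]
    exact mul_le_mul_of_nonneg_left (h.norm_sub_le hB hK₀.le) hθ0
  rw [sum_range_succ_inertial_sub hz]
  linarith [_root_.norm_sub_le (x K₀ - x (K₀ + 1)) (θ • (x K₀ - x 0))]

end NoRestart

section Epoch

variable {E : Type*} [NormedAddCommGroup E] [InnerProductSpace ℝ E] [CompleteSpace E]

theorem NoRestart.norm_gradient_add_barycenter_le {f g : E → ℝ} (hf : Differentiable ℝ f)
    (hg : Differentiable ℝ g) (hf' : Differentiable ℝ (gradient f))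
    (hg' : Differentiable ℝ (gradient g)) {Lf ρf ρg : ℝ} (hLf : 0 ≤ Lf) (hρf : 0 ≤ ρf)
    (hρg : 0 ≤ ρg) (hfL : ∀ a b, ‖gradient f a - gradient f b‖ ≤ Lf * ‖a - b‖)
    (hfH : ∀ a b, ‖fderiv ℝ (gradient f) a - fderiv ℝ (gradient f) b‖ ≤ ρf * ‖a - b‖)
    (hgH : ∀ a b, ‖fderiv ℝ (gradient g) a - fderiv ℝ (gradient g) b‖ ≤ ρg * ‖a - b‖)
    {x z : ℕ → E} {K K₀ : ℕ} {B θ η : ℝ} (h : NoRestart x K B) (hB : 0 ≤ B) (hθ0 : 0 ≤ θ)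
    (hθ1 : θ ≤ 1) (hKθ : K * θ = 1) (hη : 0 < η) (hK₀ : K / 2 ≤ K₀) (hK₀K : K₀ < K)
    (hz : ∀ k ≤ K₀, z k = x k + (1 - θ) • (x k - x (k - 1)))
    (hstep : ∀ k ≤ K₀, (1 / η) • (z k - x (k + 1)) = gradient f (x (k + 1)) + gradient g (z k))
    (hmin : ∀ k, K / 2 ≤ k → k < K → ‖x (K₀ + 1) - x K₀‖ ≤ ‖x (k + 1) - x k‖)
    {c : E} (hc : ((K₀ : ℝ) + 1) • c = ∑ k ∈ range (K₀ + 1), z k) :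
    ‖gradient (f + g) c‖
      ≤ 2 * (1 + η * Lf) * (√2 + 1) * (θ ^ 2 * B) / η + (9 / 2 * ρf + 2 * ρg) * B ^ 2 := by
  set s := range (K₀ + 1)
  have hs : (#s : ℝ) = K₀ + 1 := by simp [s]
  have hmem : ∀ k ∈ s, k ≤ K₀ := fun k hk => Nat.lt_succ_iff.1 (mem_range.1 hk)
  rw [← hs] at hc
  have hzx : ∀ k ∈ s, ‖z k - x 0‖ ≤ 2 * B := fun k hk => by
    rw [hz k (hmem k hk)]; exact h.norm_inertial_sub_le hB hθ0 hθ1 (by grind)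
  have hxx : ∀ k ∈ s, ‖x (k + 1) - x 0‖ ≤ B := fun k hk => h.norm_sub_le hB (by grind)
  have hT := h.norm_sum_inertial_sub_le hB hθ0 hKθ hK₀K hz hmin
  have hSp := sum_norm_sub_sq_le_card_mul_add_sq_of_card_smul_eq hc hzx hxx
  have hSq := sum_norm_sub_sq_le_card_mul_of_card_smul_eq hc hzx
  have hmain := card_mul_norm_gradient_add_le hf hg hf' hg' hLf hη.le hfL hfH hgH
    (p := fun k => x (k + 1)) hc fun k hk => hstep k (hmem k hk)
  have hθs : 1 ≤ 2 * θ * #s := by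
    have hK : (K : ℝ) ≤ 2 * (K₀ + 1) := by exact_mod_cast (by omega : K ≤ 2 * (K₀ + 1))
    rw [hs]
    linarith [mul_le_mul_of_nonneg_right hK hθ0]
  have hs0 : (0 : ℝ) < #s := by rw [hs]; positivity
  refine le_of_mul_le_mul_left ?_ hs0
  calc (#s : ℝ) * ‖gradient (f + g) c‖
      ≤ (1 / η + Lf) * ((√2 + 1) * θ * B)
        + (ρf / 2 * (#s * (B + 2 * B) ^ 2) + ρg / 2 * (#s * (2 * B) ^ 2)) := by
        refine hmain.trans ?_
        gcongr
    _ ≤ 2 * θ * #s * ((1 / η + Lf) * ((√2 + 1) * θ * B))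
        + (ρf / 2 * (#s * (B + 2 * B) ^ 2) + ρg / 2 * (#s * (2 * B) ^ 2)) := by
        grw [← le_mul_of_one_le_left (by positivity) hθs]
    _ = #s * (2 * (1 + η * Lf) * (√2 + 1) * (θ ^ 2 * B) / η
        + (9 / 2 * ρf + 2 * ρg) * B ^ 2) := by
        field_simp; ring

end Epoch

theorem sq_four_mul_rpow_quarter_mul_half_sqrt_div {ε ρ η : ℝ} (hε : 0 ≤ ε) (hρ : 0 < ρ)
    (hη : 0 ≤ η) :
    (4 * (ε * ρ * η ^ 2) ^ ((1 : ℝ) / 4)) ^ 2 * (1 / 2 * √(ε / ρ)) = 8 * ε * η := by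
  have hsq : ((ε * ρ * η ^ 2) ^ ((1 : ℝ) / 4)) ^ 2 = √(ε * ρ) * η := by
    rw [← Real.rpow_natCast, ← Real.rpow_mul (by positivity),
      show (1 / 4 : ℝ) * (2 : ℕ) = 1 / 2 by norm_num, ← Real.sqrt_eq_rpow,
      Real.sqrt_mul (by positivity), Real.sqrt_sq hη]
  have hε2 : √(ε * ρ) * √(ε / ρ) = ε := by
    rw [← Real.sqrt_mul (by positivity), show ε * ρ * (ε / ρ) = ε * ε by field_simp,
      Real.sqrt_mul_self hε]
  rw [mul_pow, hsq]
  linear_combination 8 * η * hε2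

theorem risp_prox_no_restart_small_gradient_general
    {d : ℕ}
    (f g F : EuclideanSpace ℝ (Fin d) → ℝ) (Lf Lg L ρf ρg ρ : ℝ)
    (hLdef : L = Lf + Lg) (hρdef : ρ = ρf + ρg) (hL : 0 < L) (hρ : 0 < ρ)
    (hFdef : ∀ w, F w = f w + g w)
    (hfd : Differentiable ℝ f) (hfd2 : Differentiable ℝ (gradient f))
    (hgd : Differentiable ℝ g) (hgd2 : Differentiable ℝ (gradient g))
    (hflip : ∀ a b : EuclideanSpace ℝ (Fin d),
      ‖gradient f a - gradient f b‖ ≤ Lf * ‖a - b‖)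
    (hglip : ∀ a b : EuclideanSpace ℝ (Fin d),
      ‖gradient g a - gradient g b‖ ≤ Lg * ‖a - b‖)
    (hfHess : ∀ a b : EuclideanSpace ℝ (Fin d),
      ‖fderiv ℝ (gradient f) a - fderiv ℝ (gradient f) b‖ ≤ ρf * ‖a - b‖)
    (hgHess : ∀ a b : EuclideanSpace ℝ (Fin d),
      ‖fderiv ℝ (gradient g) a - fderiv ℝ (gradient g) b‖ ≤ ρg * ‖a - b‖)
    (ε η B θ : ℝ) (hε : 0 < ε)
    (hη : η = 1 / (8 * L))
    (hB : B = (1 / 2) * Real.sqrt (ε / ρ))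
    (hθ : θ = 4 * (ε * ρ * η ^ 2) ^ ((1 : ℝ) / 4))
    (hθ0 : 0 < θ) (hθ1 : θ < 1)
    (K : ℕ) (hK1 : 1 ≤ K) (hKθ : (K : ℝ) * θ = 1)
    (x z : ℕ → EuclideanSpace ℝ (Fin d))
    (hz : ∀ k < K, z k = x k + (1 - θ) • (x k - x (k - 1)))
    (hchar : ∀ k < K,
      (1 / η) • (z k - x (k + 1)) = gradient f (x (k + 1)) + gradient g (z k))
    (hno_restart : ∀ k, 1 ≤ k → k ≤ K →
      (k : ℝ) * ∑ t ∈ Finset.range k, ‖x (t + 1) - x t‖ ^ 2 ≤ B ^ 2)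
    (K₀ : ℕ) (hK₀lb : K / 2 ≤ K₀) (hK₀ub : K₀ ≤ K - 1)
    (hK₀min : ∀ k, K / 2 ≤ k → k ≤ K - 1 →
      ‖x (K₀ + 1) - x K₀‖ ≤ ‖x (k + 1) - x k‖)
    (zhat : EuclideanSpace ℝ (Fin d))
    (hzhat : zhat = ((K₀ : ℝ) + 1)⁻¹ • ∑ k ∈ Finset.range (K₀ + 1), z k) :
    ‖gradient F zhat‖ ≤ 45 * ε := by
  rcases subsingleton_or_nontrivial (EuclideanSpace ℝ (Fin d)) with _ | _
  · rw [Subsingleton.elim (gradient F zhat) 0, norm_zero]; positivity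
  have hLf := nonneg_of_forall_norm_sub_le hflip
  have hLg := nonneg_of_forall_norm_sub_le hglip
  have hρf := nonneg_of_forall_norm_sub_le hfHess
  have hρg := nonneg_of_forall_norm_sub_le hgHess
  have hη0 : 0 < η := by rw [hη]; positivity
  have hB0 : 0 ≤ B := by rw [hB]; positivity
  have hθB : θ ^ 2 * B = 8 * ε * η := by
    rw [hθ, hB]; exact sq_four_mul_rpow_quarter_mul_half_sqrt_div hε.le hρ hη0.le
  have hρB : (ρf + ρg) * B ^ 2 = ε / 4 := by
    rw [← hρdef, hB, mul_pow, Real.sq_sqrt (by positivity)]; field_simp; ring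
  have hηLf : η * Lf ≤ 1 / 8 := by
    have : η * (Lf + Lg) = 1 / 8 := by rw [← hLdef, hη]; field_simp
    linarith [mul_nonneg hη0.le hLg]
  have hsqrt2 : √2 ≤ 1.4375 := (Real.sqrt_le_left (by norm_num)).2 (by norm_num)
  have hK₀ : K₀ < K := by omega
  have hgrad := NoRestart.norm_gradient_add_barycenter_le hfd hgd hfd2 hgd2 hLf hρf hρg hflip
    hfHess hgHess hno_restart hB0 hθ0.le hθ1.le hKθ hη0 hK₀lb hK₀ (fun k hk => hz k (by omega))
    (fun k hk => hchar k (by omega)) (fun k h1 h2 => hK₀min k h1 (by omega))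
    (c := zhat) (by rw [hzhat, smul_inv_smul₀ (by positivity)])
  rw [show F = f + g from funext hFdef]
  refine hgrad.trans ?_
  rw [hθB, mul_div_assoc, mul_div_assoc, div_self hη0.ne', mul_one]
  have hfirst : (1 + η * Lf) * ((√2 + 1) * ε) ≤ 9 / 8 * ((√2 + 1) * ε) := by
    gcongr; linarith
  nlinarith [mul_le_mul_of_nonneg_right hsqrt2 hε.le, mul_nonneg hρg (sq_nonneg B)]

/-- Small gradient norm at the output of a non-restarted epoch
of RISP-Prox (the convention `x^{-1} = x^0` is realized by truncated
subtraction on `ℕ`). -/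
theorem risp_prox_no_restart_small_gradient
    {d : ℕ} (hd : 1 ≤ d)
    (f g F : EuclideanSpace ℝ (Fin d) → ℝ) (Lf Lg L ρf ρg ρ : ℝ)
    (hLdef : L = Lf + Lg) (hρdef : ρ = ρf + ρg) (hL : 0 < L) (hρ : 0 < ρ)
    (hFdef : ∀ w, F w = f w + g w)
    (hfd : Differentiable ℝ f) (hfd2 : Differentiable ℝ (gradient f))
    (hgd : Differentiable ℝ g) (hgd2 : Differentiable ℝ (gradient g))
    (hflip : ∀ a b : EuclideanSpace ℝ (Fin d),
      ‖gradient f a - gradient f b‖ ≤ Lf * ‖a - b‖)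
    (hglip : ∀ a b : EuclideanSpace ℝ (Fin d),
      ‖gradient g a - gradient g b‖ ≤ Lg * ‖a - b‖)
    (hfHess : ∀ a b : EuclideanSpace ℝ (Fin d),
      ‖fderiv ℝ (gradient f) a - fderiv ℝ (gradient f) b‖ ≤ ρf * ‖a - b‖)
    (hgHess : ∀ a b : EuclideanSpace ℝ (Fin d),
      ‖fderiv ℝ (gradient g) a - fderiv ℝ (gradient g) b‖ ≤ ρg * ‖a - b‖)
    (ε η B θ : ℝ) (hε : 0 < ε)
    (hη : η = 1 / (8 * L))
    (hB : B = (1 / 2) * Real.sqrt (ε / ρ))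
    (hθ : θ = 4 * (ε * ρ * η ^ 2) ^ ((1 : ℝ) / 4))
    (hθ0 : 0 < θ) (hθ1 : θ < 1)
    (K : ℕ) (hK1 : 1 ≤ K) (hKθ : (K : ℝ) * θ = 1)
    (x z : ℕ → EuclideanSpace ℝ (Fin d))
    (hz : ∀ k < K, z k = x k + (1 - θ) • (x k - x (k - 1)))
    (hchar : ∀ k < K,
      (1 / η) • (z k - x (k + 1)) = gradient f (x (k + 1)) + gradient g (z k))
    (hno_restart : ∀ k, 1 ≤ k → k ≤ K →
      (k : ℝ) * ∑ t ∈ Finset.range k, ‖x (t + 1) - x t‖ ^ 2 ≤ B ^ 2)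
    (K₀ : ℕ) (hK₀lb : K / 2 ≤ K₀) (hK₀ub : K₀ ≤ K - 1)
    (hK₀min : ∀ k, K / 2 ≤ k → k ≤ K - 1 →
      ‖x (K₀ + 1) - x K₀‖ ≤ ‖x (k + 1) - x k‖)
    (zhat : EuclideanSpace ℝ (Fin d))
    (hzhat : zhat = ((K₀ : ℝ) + 1)⁻¹ • ∑ k ∈ Finset.range (K₀ + 1), z k) :
    ‖gradient F zhat‖ ≤ 45 * ε :=
  risp_prox_no_restart_small_gradient_general f g F Lf Lg L ρf ρg ρ hLdef hρdef hL hρ hFdef hfd hfd2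
    hgd hgd2 hflip hglip hfHess hgHess ε η B θ hε hη hB hθ hθ0 hθ1 K hK1 hKθ x z hz hchar
    hno_restart K₀ hK₀lb hK₀ub hK₀min zhat hzhat
end
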